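/- Let X be a real Banach space with topological dual X*, and let T : X ⇉ X* be a set-valued operator identified with its graph. There exists a lower semicontinuous proper sublinear functional s : X → ℝ ∪ {+∞} such that T = ∂s (the Fenchel subdifferential operator of s) if and only if T is maximally monotone and the range of T equals T(0_X). -/

import Mathlib

open Set

noncomputable section

variable {X : Type*} [NormedAddCommGroup X] [NormedSpace ℝ X]

/-- Monotonicity of a set-valued operator `T : X ⇉ X*`, identified with its graph. -/
def MonotoneGraph (T : Set (X × (X →L[ℝ] ℝ))) : Prop :=
  ∀ p ∈ T, ∀ q ∈ T, 0 ≤ (p.2 - q.2) (p.1 - q.1)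

/-- Maximal monotonicity: monotone and not properly contained in any monotone graph. -/
def MaximalMonotoneGraph (T : Set (X × (X →L[ℝ] ℝ))) : Prop :=
  MonotoneGraph T ∧ ∀ S : Set (X × (X →L[ℝ] ℝ)), MonotoneGraph S → T ⊆ S → S = T

/-- Domain of a set-valued operator given by its graph. -/
def graphDom (T : Set (X × (X →L[ℝ] ℝ))) : Set X := {x | ∃ u, (x, u) ∈ T}

/-- Range of a set-valued operator given by its graph. -/
def graphRange (T : Set (X × (X →L[ℝ] ℝ))) : Set (X →L[ℝ] ℝ) := {u | ∃ x, (x, u) ∈ T}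

/-- The normal cone operator `N_C : X ⇉ X*` of a set `C ⊆ X`, as a graph. -/
def normalConeGraph (C : Set X) : Set (X × (X →L[ℝ] ℝ)) :=
  {p | p.1 ∈ C ∧ ∀ y ∈ C, p.2 (y - p.1) ≤ 0}

/-- The Fenchel subdifferential operator `∂f : X ⇉ X*` of `f : X → ℝ ∪ {+∞}`, as a graph. -/
def subdiffGraph (f : X → EReal) : Set (X × (X →L[ℝ] ℝ)) :=
  {p | ∀ y : X, f p.1 + ((p.2 (y - p.1) : ℝ) : EReal) ≤ f y}

/-- `f` is proper: never `−∞` and not identically `+∞`. -/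
def ProperFn (f : X → EReal) : Prop := (∀ x, f x ≠ ⊥) ∧ ∃ x, f x ≠ ⊤

/-- Convexity of an extended-real-valued functional. -/
def ConvexFn (f : X → EReal) : Prop :=
  ∀ x y : X, ∀ t : ℝ, 0 ≤ t → t ≤ 1 →
    f (t • x + (1 - t) • y) ≤ (t : EReal) * f x + ((1 - t : ℝ) : EReal) * f y

/-- Positive homogeneity: `f (c • x) = c * f x` for `c ≥ 0` and `f x` finite. -/
def PosHomFn (f : X → EReal) : Prop :=
  ∀ x : X, f x ≠ ⊤ → ∀ c : ℝ, 0 ≤ c → f (c • x) = (c : EReal) * f x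

/-- The epigraph of `f : X → ℝ ∪ {+∞}`. -/
def Epi (f : X → EReal) : Set (X × ℝ) := {p | f p.1 ≤ (p.2 : EReal)}

/-- Duality pairing between `X × ℝ` and `X* × ℝ`. -/
def pairXR (p : X × ℝ) (q : (X →L[ℝ] ℝ) × ℝ) : ℝ := q.1 p.1 + p.2 * q.2

/-- Monotonicity of an operator `A : X × ℝ ⇉ X* × ℝ`, identified with its graph. -/
def MonotoneGraphXR (A : Set ((X × ℝ) × ((X →L[ℝ] ℝ) × ℝ))) : Prop :=
  ∀ p ∈ A, ∀ q ∈ A, 0 ≤ pairXR (p.1 - q.1) (p.2 - q.2)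

/-- Domain of an operator `A : X × ℝ ⇉ X* × ℝ`. -/
def graphDomXR (A : Set ((X × ℝ) × ((X →L[ℝ] ℝ) × ℝ))) : Set (X × ℝ) :=
  {c | ∃ u, (c, u) ∈ A}

/-- The normal cone operator of a subset of `X × ℝ`, as a graph. -/
def normalConeGraphXR (C : Set (X × ℝ)) : Set ((X × ℝ) × ((X →L[ℝ] ℝ) × ℝ)) :=
  {p | p.1 ∈ C ∧ ∀ d ∈ C, pairXR (d - p.1) p.2 ≤ 0}

/-- The operator `A_X : X ⇉ X*` induced by `A : X × ℝ ⇉ X* × ℝ`. -/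
def inducedGraph (A : Set ((X × ℝ) × ((X →L[ℝ] ℝ) × ℝ))) : Set (X × (X →L[ℝ] ℝ)) :=
  {p | ∃ lam : ℝ, ((p.1, lam), (p.2, (-1 : ℝ))) ∈ A}

/-- `d` belongs to the recession cone of `C`, i.e. `C + ℝ₊ d = C` (as a set equality). -/
def recessionEq {Y : Type*} [AddCommGroup Y] [Module ℝ Y] (C : Set Y) (d : Y) : Prop :=
  {y | ∃ c ∈ C, ∃ t : ℝ, 0 ≤ t ∧ y = c + t • d} = C

/-!
For a sublinear `s`, the subgradients of `s` at `x` are the continuous linear minorants `u` of `s`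
with `s x ≤ u x`; in particular `∂s(0)` is the set of all minorants, which is the whole range of
`∂s`. A pair `(x, v)` monotonically related to `∂s` satisfies `s x ≤ v x`, because `s` is the
supremum of its minorants (separate points from the epigraph, a closed convex cone). It also
satisfies `v ≤ s`: otherwise a Brøndsted–Rockafellar argument (Ekeland's principle followed by a
separation) produces `(z, u) ∈ ∂s` with `u z < v z`, and the pairs `(t • z, u) ∈ ∂s` break
monotonicity as `t → ∞`. Hence `∂s` is maximally monotone.

Conversely, if `T` is maximally monotone and `range T = T(0)`, let `σ` be the support function of
`T(0)`. For `(x, w) ∈ T`, monotonicity against the pairs `(0, u)` gives `u x ≤ w x`, so `σ x ≤ w x`,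
and `w ∈ T(0)` is a minorant of `σ`; thus `T ⊆ ∂σ`, and maximality forces `T = ∂σ`.
-/

open Filter Topology

section Ekeland

variable {M : Type*} [MetricSpace M] [CompleteSpace M] {G : M → ℝ} {ε : ℝ}

/-- Ekeland's variational principle. -/
theorem LowerSemicontinuous.exists_le_forall_le_add_mul_dist (hG : LowerSemicontinuous G)
    (hbdd : BddBelow (range G)) (hε : 0 < ε) (x₀ : M) :
    ∃ z, G z ≤ G x₀ ∧ ∀ p, G z ≤ G p + ε * dist p z := by
  set S : M → Set M := fun q => {p | G p + ε * dist p q ≤ G q} with hS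
  have mem_self (q : M) : q ∈ S q := by simp [hS]
  have mem_trans {p q r : M} (hpq : p ∈ S q) (hqr : q ∈ S r) : p ∈ S r := by
    simp only [hS, mem_ofPred_eq] at *
    nlinarith [dist_triangle p q r]
  have isClosed_S (q : M) : IsClosed (S q) :=
    (hG.add (continuous_const.mul (continuous_id.dist continuous_const)).lowerSemicontinuous)
      |>.isClosed_preimage (G q)
  have near_inf (n : ℕ) (q : M) : ∃ p ∈ S q, ∀ p' ∈ S q, G p ≤ G p' + (1 / 2) ^ n := by
    obtain ⟨_, ⟨p, hp, rfl⟩, hlt⟩ := Real.lt_sInf_add_pos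
      (Set.Nonempty.image G ⟨q, mem_self q⟩) (show (0 : ℝ) < (1 / 2) ^ n by positivity)
    exact ⟨p, hp, fun p' hp' =>
      hlt.le.trans (by gcongr; exact csInf_le (hbdd.mono (image_subset_range _ _)) ⟨p', hp', rfl⟩)⟩
  have geom : Tendsto (fun n : ℕ => (1 / 2 : ℝ) ^ n) atTop (𝓝 0) :=
    tendsto_pow_atTop_nhds_zero_of_lt_one (by norm_num) (by norm_num)
  choose next next_mem next_le using near_inf
  set x : ℕ → M := fun n => Nat.rec x₀ next n
  have x_succ (n : ℕ) : x (n + 1) = next n (x n) := rfl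
  have mem_of_le {n k : ℕ} (h : n ≤ k) : x k ∈ S (x n) := by
    induction k, h using Nat.le_induction with
    | base => exact mem_self _
    | succ k _ ih => exact mem_trans (x_succ k ▸ next_mem k (x k)) ih
  -- the tail after `x (n + 1)` lies in `S (x (n + 1))`, on which `G` varies by at most `2⁻ⁿ`
  have dist_le {n k : ℕ} (h : n ≤ k) : dist (x (n + 1)) (x (k + 1)) ≤ (1 / 2) ^ n / ε := by
    have h1 := mem_of_le (Nat.succ_le_succ h)
    have h2 := next_le n (x n) _ (mem_of_le (h.trans k.le_succ))
    rw [← x_succ] at h2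
    simp only [hS, mem_ofPred_eq] at h1
    rw [le_div_iff₀ hε, dist_comm]
    linarith
  obtain ⟨z, hz⟩ := cauchySeq_tendsto_of_complete (cauchySeq_of_le_tendsto_0' _
    (fun n k h => dist_le h) (by simpa using geom.div_const ε))
  have z_mem (n : ℕ) : z ∈ S (x n) :=
    (isClosed_S _).mem_of_tendsto hz (eventually_ge_atTop n |>.mono fun k hk =>
      mem_of_le (hk.trans k.le_succ))
  refine ⟨z, le_of_add_le_of_nonneg_left (z_mem 0) (by positivity), fun p => ?_⟩
  by_contra! hp
  have hpz : p ∈ S z := hp.le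
  have h_le (n : ℕ) : G z ≤ G p + (1 / 2) ^ n := by
    have h1 := z_mem (n + 1)
    simp only [hS, mem_ofPred_eq] at h1
    have := next_le n (x n) p (mem_trans hpz (z_mem n))
    rw [← x_succ] at this
    linarith [mul_nonneg hε.le (dist_nonneg (x := z) (y := x (n + 1)))]
  have : G z ≤ G p := by simpa using ge_of_tendsto' (tendsto_const_nhds.add geom) h_le
  linarith [dist_nonneg (x := p) (y := z), mul_nonneg hε.le (dist_nonneg (x := p) (y := z))]

end Ekeland

lemma ContinuousLinearMap.apply_prod_eq (f : X × ℝ →L[ℝ] ℝ) (y : X) (t : ℝ) :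
    f (y, t) = f (y, 0) + t * f (0, 1) := by
  rw [← smul_eq_mul, ← map_smul, ← map_add]
  simp

lemma convex_setOf_lt_sub_mul_norm (r L : ℝ) (hL : 0 ≤ L) (z : X) :
    Convex ℝ {p : X × ℝ | p.2 < r - L * ‖p.1 - z‖} := by
  have hφ : ConvexOn ℝ univ fun p : X × ℝ => p.2 + L * ‖p.1 - z‖ := by
    refine ((LinearMap.snd ℝ X ℝ).convexOn convex_univ).add ?_
    have := ((convexOn_norm convex_univ).comp_affineMap
      ((LinearMap.fst ℝ X ℝ).toAffineMap - AffineMap.const ℝ (X × ℝ) z)).smul hL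
    simpa using this
  have hA : {p : X × ℝ | p.2 < r - L * ‖p.1 - z‖} = {p ∈ univ | p.2 + L * ‖p.1 - z‖ < r} := by
    ext p
    simp [lt_sub_iff_add_lt]
  exact hA ▸ hφ.convex_lt r

lemma Convex.exists_add_apply_le_of_sub_mul_norm_le {K : Set (X × ℝ)} (hK : Convex ℝ K)
    {z : X} {r L : ℝ} (hL : 0 ≤ L) (hzr : (z, r) ∈ K)
    (hcone : ∀ p ∈ K, r - L * ‖p.1 - z‖ ≤ p.2) :
    ∃ u : X →L[ℝ] ℝ, ∀ p ∈ K, r + u (p.1 - z) ≤ p.2 := by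
  set A := {p : X × ℝ | p.2 < r - L * ‖p.1 - z‖}
  have hA : IsOpen A := isOpen_lt continuous_snd (by fun_prop)
  have hdisj : Disjoint A K :=
    disjoint_left.2 fun p hpA hpK => (hcone p hpK).not_gt hpA
  obtain ⟨f, c, hfA, hfK⟩ :=
    geometric_hahn_banach_open (convex_setOf_lt_sub_mul_norm r L hL z) hA hK hdisj
  set a := f (0, 1)
  have below (τ : ℝ) (hτ : τ < r) : f (z, 0) + τ * a < c := by
    rw [← f.apply_prod_eq]
    exact hfA (z, τ) (by simpa [A] using hτ)
  have vertex : c ≤ f (z, 0) + r * a := f.apply_prod_eq z r ▸ hfK _ hzr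
  have ha : 0 < a := by linarith [below (r - 1) (by linarith)]
  have hc : f (z, 0) + r * a ≤ c := by
    have : r ≤ (c - f (z, 0)) / a :=
      le_of_forall_lt fun τ hτ => by rw [lt_div_iff₀ ha]; linarith [below τ hτ]
    rw [le_div_iff₀ ha] at this
    linarith
  refine ⟨-a⁻¹ • f.comp (ContinuousLinearMap.inl ℝ X ℝ), fun p hp => ?_⟩
  have hfp := hfK p hp
  rw [f.apply_prod_eq] at hfp
  have : f (p.1 - z, 0) = f (p.1, 0) - f (z, 0) := by rw [← map_sub]; simp
  have key : a⁻¹ * (f (z, 0) - f (p.1, 0)) ≤ p.2 - r := by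
    rw [inv_mul_le_iff₀ ha]
    linarith
  simp only [smul_apply, ContinuousLinearMap.comp_apply,
    ContinuousLinearMap.inl_apply, smul_eq_mul, this]
  linarith

lemma ProperFn.exists_eq_coe {α : Type*} {f : α → EReal} (hp : ProperFn f) {x : α}
    (hx : f x ≠ ⊤) : ∃ a : ℝ, f x = a :=
  ⟨(f x).toReal, (EReal.coe_toReal hx (hp.1 x)).symm⟩

lemma LowerSemicontinuous.isClosed_epi {α : Type*} [TopologicalSpace α] {f : α → EReal}
    (hf : LowerSemicontinuous f) : IsClosed (Epi f) :=
  hf.isClosed_epigraph.preimage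
    (continuous_fst.prodMk (continuous_coe_real_ereal.comp continuous_snd))

lemma ConvexFn.convex_epi {f : X → EReal} (hc : ConvexFn f) : Convex ℝ (Epi f) := by
  rintro ⟨x, a⟩ hx ⟨y, b⟩ hy t t' ht ht' htt'
  obtain rfl : t' = 1 - t := by linarith
  calc f (t • x + (1 - t) • y) ≤ (t : EReal) * f x + ((1 - t : ℝ) : EReal) * f y :=
        hc x y t ht (by linarith)
    _ ≤ (t : EReal) * a + ((1 - t : ℝ) : EReal) * b := by
        gcongr
        exacts [hx, hy]
    _ = ((t * a + (1 - t) * b : ℝ) : EReal) := by norm_cast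

def linearMinorants (s : X → EReal) : Set (X →L[ℝ] ℝ) := {u | ∀ y, (u y : EReal) ≤ s y}

section Sublinear

variable {s : X → EReal}

lemma PosHomFn.apply_zero (hh : PosHomFn s) (hp : ProperFn s) : s 0 = 0 := by
  obtain ⟨x, hx⟩ := hp.2
  simpa using hh x hx 0 le_rfl

lemma PosHomFn.apply_smul_le (hh : PosHomFn s) {x : X} {r : ℝ} (hx : s x ≤ r) {c : ℝ}
    (hc : 0 ≤ c) : s (c • x) ≤ (c * r : ℝ) := by
  rw [hh x (ne_top_of_le_ne_top (EReal.coe_ne_top r) hx) c hc, EReal.coe_mul]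
  exact mul_le_mul_of_nonneg_left hx (EReal.coe_nonneg.2 hc)

lemma ConvexFn.apply_add_le (hc : ConvexFn s) (hh : PosHomFn s) {x y : X} {a b : ℝ} (hx : s x ≤ a)
    (hy : s y ≤ b) : s (x + y) ≤ (a + b : ℝ) := by
  have hmid : s ((1 / 2 : ℝ) • x + (1 - 1 / 2 : ℝ) • y) ≤ ((1 / 2 * a + 1 / 2 * b : ℝ) : EReal) :=
    calc _ ≤ ((1 / 2 : ℝ) : EReal) * s x + ((1 - 1 / 2 : ℝ) : EReal) * s y :=
          hc x y _ (by norm_num) (by norm_num)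
      _ ≤ ((1 / 2 : ℝ) : EReal) * a + ((1 - 1 / 2 : ℝ) : EReal) * b := by gcongr
      _ = _ := by norm_num [← EReal.coe_mul, ← EReal.coe_add]
  convert hh.apply_smul_le hmid zero_le_two using 2
  · rw [smul_add, smul_smul, smul_smul]; norm_num
  · ring

def epiCone (hl : LowerSemicontinuous s) (hp : ProperFn s) (hc : ConvexFn s) (hh : PosHomFn s) :
    ProperCone ℝ (X × ℝ) where
  carrier := Epi s
  add_mem' hx hy := hc.apply_add_le hh hx hy
  zero_mem' := (hh.apply_zero hp).trans_le le_rfl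
  smul_mem' c _ hx := hh.apply_smul_le hx c.2
  isClosed' := hl.isClosed_epi

lemma exists_separation_of_lt (hl : LowerSemicontinuous s) (hp : ProperFn s) (hc : ConvexFn s)
    (hh : PosHomFn s) {x : X} {r : ℝ} (hr : (r : EReal) < s x) :
    ∃ (w : X →L[ℝ] ℝ) (a : ℝ), 0 ≤ a ∧ (∀ y (b : ℝ), s y ≤ b → 0 ≤ w y + b * a) ∧
      w x + r * a < 0 := by
  obtain ⟨f, hf, hfx⟩ := (epiCone hl hp hc hh).hyperplane_separation_point (x₀ := (x, r))
    (not_le.2 hr)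
  refine ⟨f.comp (ContinuousLinearMap.inl ℝ X ℝ), f (0, 1), ?_, fun y b hyb => ?_, ?_⟩
  · exact hf _ (show s 0 ≤ ((1 : ℝ) : EReal) by simp [hh.apply_zero hp])
  · simpa [← f.apply_prod_eq] using hf (y, b) hyb
  · simpa [← f.apply_prod_eq] using hfx

lemma smul_mem_linearMinorants (hp : ProperFn s) {w : X →L[ℝ] ℝ} {a : ℝ} (ha : 0 < a)
    (hw : ∀ y (b : ℝ), s y ≤ b → 0 ≤ w y + b * a) : -a⁻¹ • w ∈ linearMinorants s := by
  intro y
  obtain hy | hy := eq_or_ne (s y) ⊤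
  · simp [hy]
  obtain ⟨b, hb⟩ := hp.exists_eq_coe hy
  have := hw y b hb.le
  rw [hb, EReal.coe_le_coe_iff, smul_apply, smul_eq_mul, neg_mul, neg_le, le_inv_mul_iff₀ ha]
  linarith

lemma linearMinorants_nonempty (hl : LowerSemicontinuous s) (hp : ProperFn s) (hc : ConvexFn s)
    (hh : PosHomFn s) : (linearMinorants s).Nonempty := by
  obtain ⟨x, hx⟩ := hp.2
  obtain ⟨b, hb⟩ := hp.exists_eq_coe hx
  obtain ⟨w, a, ha, hw, hwx⟩ :=
    exists_separation_of_lt hl hp hc hh (x := x) (r := b - 1)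
      (by rw [hb]; exact EReal.coe_lt_coe_iff.2 (by linarith))
  obtain rfl | ha := ha.eq_or_lt
  · linarith [hw x b hb.le]
  · exact ⟨_, smul_mem_linearMinorants hp ha hw⟩

lemma exists_mem_linearMinorants_lt (hl : LowerSemicontinuous s) (hp : ProperFn s)
    (hc : ConvexFn s) (hh : PosHomFn s) {x : X} {r : ℝ} (hr : (r : EReal) < s x) :
    ∃ u ∈ linearMinorants s, r < u x := by
  obtain ⟨w, a, ha, hw, hwx⟩ := exists_separation_of_lt hl hp hc hh hr
  obtain rfl | ha := ha.eq_or_lt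
  · -- a vertical separating hyperplane tilts a known minorant `u₀` upwards at `x`
    obtain ⟨u₀, hu₀⟩ := linearMinorants_nonempty hl hp hc hh
    simp only [mul_zero, add_zero] at hw hwx
    set t := (|r - u₀ x| + 1) / -w x
    have ht : 0 ≤ t := div_nonneg (by positivity) (by linarith)
    refine ⟨u₀ - t • w, fun y => ?_, ?_⟩
    · obtain hy | hy := eq_or_ne (s y) ⊤
      · simp [hy]
      obtain ⟨b, hb⟩ := hp.exists_eq_coe hy
      have hu₀y : u₀ y ≤ b := by exact_mod_cast hb ▸ hu₀ y
      rw [hb, EReal.coe_le_coe_iff]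
      simp only [sub_apply, smul_apply, smul_eq_mul]
      nlinarith [hw y b hb.le]
    · have : t * w x = -(|r - u₀ x| + 1) := by
        rw [show t = _ from rfl, div_mul_eq_mul_div, div_eq_iff (neg_ne_zero.2 hwx.ne)]
        ring
      simp only [sub_apply, smul_apply, smul_eq_mul, this]
      linarith [le_abs_self (r - u₀ x)]
  · refine ⟨_, smul_mem_linearMinorants hp ha hw, ?_⟩
    rw [smul_apply, smul_eq_mul, neg_mul, lt_neg, inv_mul_lt_iff₀ ha]
    linarith

end Sublinear

section Subdifferential

variable {f s : X → EReal}

lemma ne_top_of_mem_subdiffGraph (hf : ∃ x, f x ≠ ⊤) {z : X} {u : X →L[ℝ] ℝ}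
    (h : (z, u) ∈ subdiffGraph f) : f z ≠ ⊤ := by
  obtain ⟨x, hx⟩ := hf
  intro hz
  have := h x
  simp only [hz, EReal.top_add_coe, top_le_iff] at this
  exact hx this

lemma monotoneGraph_subdiffGraph (hp : ProperFn f) : MonotoneGraph (subdiffGraph f) := by
  rintro ⟨x, u⟩ hx ⟨y, v⟩ hy
  obtain ⟨a, ha⟩ := hp.exists_eq_coe (ne_top_of_mem_subdiffGraph hp.2 hx)
  obtain ⟨b, hb⟩ := hp.exists_eq_coe (ne_top_of_mem_subdiffGraph hp.2 hy)
  have hxy := hx y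
  have hyx := hy x
  simp only [ha, hb] at hxy hyx
  norm_cast at hxy hyx
  simp only [sub_apply, map_sub] at *
  linarith

lemma mem_subdiffGraph_of_affine_minorant {z : X} {r : ℝ} {u : X →L[ℝ] ℝ} (hz : f z ≤ r)
    (h : ∀ y (t : ℝ), f y ≤ t → r + u (y - z) ≤ t) : (z, u) ∈ subdiffGraph f := by
  intro y
  induction hy : f y using EReal.rec with
  | bot => linarith [h y (r + u (y - z) - 1) (by simp [hy])]
  | coe b =>
    calc f z + (u (y - z) : EReal) ≤ (r : EReal) + (u (y - z) : EReal) := by gcongr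
      _ ≤ b := by exact_mod_cast h y b hy.le
  | top => exact le_top

lemma mem_subdiffGraph_of_mem_linearMinorants {z : X} {u : X →L[ℝ] ℝ}
    (hu : u ∈ linearMinorants f) (hz : f z ≤ u z) : (z, u) ∈ subdiffGraph f :=
  mem_subdiffGraph_of_affine_minorant hz fun y _ hyt => by
    rw [map_sub, add_sub_cancel]
    exact_mod_cast (hu y).trans hyt

lemma mem_subdiffGraph_iff (hp : ProperFn s) (hc : ConvexFn s) (hh : PosHomFn s) {z : X}
    {u : X →L[ℝ] ℝ} : (z, u) ∈ subdiffGraph s ↔ u ∈ linearMinorants s ∧ s z ≤ u z := by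
  refine ⟨fun h => ?_, fun h => mem_subdiffGraph_of_mem_linearMinorants h.1 h.2⟩
  obtain ⟨a, ha⟩ := hp.exists_eq_coe (ne_top_of_mem_subdiffGraph hp.2 h)
  have hle (y : X) : ((a + u y : ℝ) : EReal) ≤ s (z + y) := by
    simpa [ha] using h (z + y)
  refine ⟨fun y => ?_, ?_⟩
  · obtain hy | hy := eq_or_ne (s y) ⊤
    · simp [hy]
    obtain ⟨b, hb⟩ := hp.exists_eq_coe hy
    have := (hle y).trans (hc.apply_add_le hh ha.le hb.le)
    rw [hb, EReal.coe_le_coe_iff] at *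
    linarith
  · have := hle (-z)
    rw [add_neg_cancel, hh.apply_zero hp, map_neg, ← sub_eq_add_neg] at this
    rw [ha, EReal.coe_le_coe_iff]
    exact sub_nonpos.1 (by exact_mod_cast this)

lemma mem_subdiffGraph_zero_iff (hp : ProperFn s) (hc : ConvexFn s) (hh : PosHomFn s)
    {u : X →L[ℝ] ℝ} : ((0 : X), u) ∈ subdiffGraph s ↔ u ∈ linearMinorants s := by
  simp [mem_subdiffGraph_iff hp hc hh, hh.apply_zero hp]

lemma smul_mem_subdiffGraph (hp : ProperFn s) (hc : ConvexFn s) (hh : PosHomFn s) {z : X}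
    {u : X →L[ℝ] ℝ} (h : (z, u) ∈ subdiffGraph s) {t : ℝ} (ht : 0 ≤ t) :
    (t • z, u) ∈ subdiffGraph s := by
  obtain ⟨hu, hz⟩ := (mem_subdiffGraph_iff hp hc hh).1 h
  exact (mem_subdiffGraph_iff hp hc hh).2 ⟨hu, by simpa using hh.apply_smul_le hz ht⟩

lemma graphRange_subdiffGraph (hp : ProperFn s) (hc : ConvexFn s) (hh : PosHomFn s) :
    graphRange (subdiffGraph s) = {u | ((0 : X), u) ∈ subdiffGraph s} := by
  ext u
  refine ⟨fun ⟨x, hx⟩ => ?_, fun h => ⟨0, h⟩⟩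
  exact (mem_subdiffGraph_zero_iff hp hc hh).2 ((mem_subdiffGraph_iff hp hc hh).1 hx).1

end Subdifferential

lemma sub_mul_norm_le_of_le_add_dist {E : Type*} [SeminormedAddCommGroup E] {y z y₀ : E}
    {t r c : ℝ} (hc : 0 ≤ c)
    (h : r + c * ‖z - y₀‖ ≤ t + c * ‖y - y₀‖ + 1 / 2 * dist (y, t) (z, r)) :
    r - (2 * c + 1) * ‖y - z‖ ≤ t := by
  have hd : dist (y, t) (z, r) ≤ ‖y - z‖ + |t - r| := by
    rw [Prod.dist_eq, dist_eq_norm, Real.dist_eq]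
    exact max_le_add_of_nonneg (norm_nonneg _) (abs_nonneg _)
  have htri := mul_le_mul_of_nonneg_left (norm_sub_le_norm_sub_add_norm_sub y z y₀) hc
  rcases le_or_gt r t with hrt | hrt
  · nlinarith [norm_nonneg (y - z)]
  · rw [abs_of_neg (sub_neg.2 hrt)] at hd
    nlinarith

/-- A Brøndsted–Rockafellar argument: Ekeland's principle, applied on the epigraph of `f - v` to
`(y, t) ↦ t + ‖u₀ - v‖ ‖y - y₀‖` (bounded below because `u₀ ≤ f`), yields a point `(z, r)` of that
epigraph with `r < 0` at which the epigraph lies above a downward cone; separating the cone from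
the epigraph gives a subgradient of `f` at `z`. -/
lemma exists_mem_subdiffGraph_apply_lt [CompleteSpace X] {f : X → EReal}
    (hl : LowerSemicontinuous f) (hc : ConvexFn f) {u₀ : X →L[ℝ] ℝ}
    (hu₀ : u₀ ∈ linearMinorants f) {v : X →L[ℝ] ℝ} {y₀ : X} (hy₀ : f y₀ < v y₀) :
    ∃ z u, (z, u) ∈ subdiffGraph f ∧ f z < v z := by
  have hp : ProperFn f :=
    ⟨fun y => ne_bot_of_le_ne_bot (EReal.coe_ne_bot _) (hu₀ y), y₀, hy₀.ne_top⟩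
  -- `K` is the epigraph of `f - v`
  set Φ : X × ℝ →L[ℝ] X × ℝ := (ContinuousLinearMap.fst ℝ X ℝ).prod
    (ContinuousLinearMap.snd ℝ X ℝ + v.comp (ContinuousLinearMap.fst ℝ X ℝ))
  set K := Φ ⁻¹' Epi f
  have mem_K {y : X} {t : ℝ} : (y, t) ∈ K ↔ f y ≤ (t + v y : ℝ) := Iff.rfl
  have : CompleteSpace K := (hl.isClosed_epi.preimage Φ.continuous).completeSpace_coe
  obtain ⟨a₀, ha₀⟩ := hp.exists_eq_coe hy₀.ne_top
  have hy₀K : (y₀, a₀ - v y₀) ∈ K := mem_K.2 (by simp [ha₀])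
  set w₀ := u₀ - v
  set G : K → ℝ := fun p => p.1.2 + ‖w₀‖ * ‖p.1.1 - y₀‖
  have hG : Continuous G := by fun_prop
  have hG_bdd : BddBelow (range G) := by
    refine ⟨w₀ y₀, ?_⟩
    rintro _ ⟨⟨⟨y, t⟩, hyt⟩, rfl⟩
    have h1 : u₀ y ≤ t + v y := EReal.coe_le_coe_iff.1 ((hu₀ y).trans (mem_K.1 hyt))
    have h2 : w₀ (y₀ - y) ≤ ‖w₀‖ * ‖y - y₀‖ := by
      rw [← norm_neg (y - y₀), neg_sub]
      exact (le_abs_self _).trans (w₀.le_opNorm _)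
    simp only [G, w₀, map_sub, sub_apply] at h2 ⊢
    linarith
  obtain ⟨⟨⟨z, r⟩, hzr⟩, hG₀, hmin⟩ := hG.lowerSemicontinuous.exists_le_forall_le_add_mul_dist
    hG_bdd (by norm_num : (0 : ℝ) < 1 / 2) ⟨_, hy₀K⟩
  have hr : r < 0 := by
    simp only [G, sub_self, norm_zero, mul_zero, add_zero] at hG₀
    have : a₀ < v y₀ := EReal.coe_lt_coe_iff.1 (ha₀ ▸ hy₀)
    nlinarith [norm_nonneg w₀, norm_nonneg (z - y₀)]
  have hcone : ∀ p ∈ K, r - (2 * ‖w₀‖ + 1) * ‖p.1 - z‖ ≤ p.2 := fun p hp =>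
    sub_mul_norm_le_of_le_add_dist (norm_nonneg w₀) (hmin ⟨p, hp⟩)
  obtain ⟨u', hu'⟩ := (hc.convex_epi.linear_preimage Φ.toLinearMap)
    |>.exists_add_apply_le_of_sub_mul_norm_le (by positivity) hzr hcone
  refine ⟨z, u' + v, mem_subdiffGraph_of_affine_minorant (mem_K.1 hzr) fun y t hyt => ?_,
    (mem_K.1 hzr).trans_lt (EReal.coe_lt_coe_iff.2 (by linarith))⟩
  have := hu' (y, t - v y) (mem_K.2 (by simpa using hyt))
  simp only [add_apply, map_sub] at this ⊢
  linarith

def MonotonicallyRelated (T : Set (X × (X →L[ℝ] ℝ))) (p : X × (X →L[ℝ] ℝ)) : Prop :=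
  ∀ q ∈ T, 0 ≤ (p.2 - q.2) (p.1 - q.1)

lemma maximalMonotoneGraph_of_monotonicallyRelated {T : Set (X × (X →L[ℝ] ℝ))}
    (hT : MonotoneGraph T) (h : ∀ p, MonotonicallyRelated T p → p ∈ T) :
    MaximalMonotoneGraph T :=
  ⟨hT, fun _ hS hTS => Subset.antisymm (fun p hp => h p fun q hq => hS p hp q (hTS hq)) hTS⟩

lemma MaximalMonotoneGraph.nonempty {T : Set (X × (X →L[ℝ] ℝ))} (hT : MaximalMonotoneGraph T) :
    T.Nonempty := by
  rw [nonempty_iff_ne_empty]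
  rintro rfl
  exact singleton_ne_empty ((0 : X), (0 : X →L[ℝ] ℝ))
    (hT.2 _ (by rintro _ rfl _ rfl; simp) (empty_subset _))

section Forward

variable {s : X → EReal}

lemma mem_linearMinorants_of_monotonicallyRelated [CompleteSpace X] (hl : LowerSemicontinuous s)
    (hp : ProperFn s) (hc : ConvexFn s) (hh : PosHomFn s) {x : X} {v : X →L[ℝ] ℝ}
    (hxv : MonotonicallyRelated (subdiffGraph s) (x, v)) : v ∈ linearMinorants s := by
  by_contra hv
  obtain ⟨y₀, hy₀⟩ : ∃ y₀, s y₀ < v y₀ := by simpa [linearMinorants] using hv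
  obtain ⟨u₀, hu₀⟩ := linearMinorants_nonempty hl hp hc hh
  obtain ⟨z, u, hzu, hsz⟩ := exists_mem_subdiffGraph_apply_lt hl hc hu₀ hy₀
  have hd : 0 < (v - u) z := by
    have := ((mem_subdiffGraph_iff hp hc hh).1 hzu).1 z
    simpa using EReal.coe_lt_coe_iff.1 (this.trans_lt hsz)
  -- far out on the ray through `z`, the point `(t • z, u)` of the graph breaks monotonicity
  set t := |(v - u) x| / (v - u) z + 1
  have ht : t * (v - u) z = |(v - u) x| + (v - u) z := by
    rw [add_mul, div_mul_cancel₀ _ hd.ne', one_mul]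
  have := hxv _ (smul_mem_subdiffGraph hp hc hh hzu (by positivity : 0 ≤ t))
  rw [map_sub, map_smul, smul_eq_mul, ht] at this
  linarith [le_abs_self ((v - u) x)]

lemma le_of_monotonicallyRelated (hl : LowerSemicontinuous s) (hp : ProperFn s)
    (hc : ConvexFn s) (hh : PosHomFn s) {x : X} {v : X →L[ℝ] ℝ}
    (hxv : MonotonicallyRelated (subdiffGraph s) (x, v)) : s x ≤ v x := by
  by_contra! hlt
  obtain ⟨u, hu, hux⟩ := exists_mem_linearMinorants_lt hl hp hc hh hlt
  have := hxv _ ((mem_subdiffGraph_zero_iff hp hc hh).2 hu)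
  simp only [sub_zero, sub_apply] at this
  linarith

lemma maximalMonotoneGraph_subdiffGraph [CompleteSpace X] (hl : LowerSemicontinuous s)
    (hp : ProperFn s) (hc : ConvexFn s) (hh : PosHomFn s) : MaximalMonotoneGraph (subdiffGraph s) :=
  maximalMonotoneGraph_of_monotonicallyRelated (monotoneGraph_subdiffGraph hp) fun _ h =>
    (mem_subdiffGraph_iff hp hc hh).2 ⟨mem_linearMinorants_of_monotonicallyRelated hl hp hc hh h,
      le_of_monotonicallyRelated hl hp hc hh h⟩

end Forward

section SupportFn

variable {C : Set (X →L[ℝ] ℝ)}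

def supportFn (C : Set (X →L[ℝ] ℝ)) (x : X) : EReal := ⨆ u ∈ C, (u x : EReal)

lemma mem_linearMinorants_supportFn {u : X →L[ℝ] ℝ} (hu : u ∈ C) :
    u ∈ linearMinorants (supportFn C) :=
  fun x => le_iSup₂ (f := fun u _ => (u x : EReal)) u hu

lemma supportFn_le {x : X} {b : EReal} (h : ∀ u ∈ C, (u x : EReal) ≤ b) : supportFn C x ≤ b :=
  iSup₂_le h

lemma lowerSemicontinuous_supportFn : LowerSemicontinuous (supportFn C) :=
  lowerSemicontinuous_biSup fun u _ =>
    (continuous_coe_real_ereal.comp u.continuous).lowerSemicontinuous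

lemma convexFn_supportFn : ConvexFn (supportFn C) := by
  intro x y t ht₀ ht₁
  refine supportFn_le fun u hu => ?_
  rw [map_add, map_smul, map_smul, smul_eq_mul, smul_eq_mul, EReal.coe_add, EReal.coe_mul,
    EReal.coe_mul]
  gcongr <;> exact mem_linearMinorants_supportFn hu _

lemma supportFn_smul_le {c : ℝ} (hc : 0 ≤ c) (x : X) :
    supportFn C (c • x) ≤ c * supportFn C x := by
  refine supportFn_le fun u hu => ?_
  rw [map_smul, smul_eq_mul, EReal.coe_mul]
  exact mul_le_mul_of_nonneg_left (mem_linearMinorants_supportFn hu x) (EReal.coe_nonneg.2 hc)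

lemma supportFn_zero (hC : C.Nonempty) : supportFn C 0 = 0 :=
  le_antisymm (supportFn_le fun u _ => by simp)
    (by simpa using mem_linearMinorants_supportFn hC.some_mem (0 : X))

lemma properFn_supportFn (hC : C.Nonempty) : ProperFn (supportFn C) :=
  ⟨fun x => ne_bot_of_le_ne_bot (EReal.coe_ne_bot _) (mem_linearMinorants_supportFn hC.some_mem x),
    0, by simp [supportFn_zero hC]⟩

lemma posHomFn_supportFn (hC : C.Nonempty) : PosHomFn (supportFn C) := by
  intro x _ c hc
  obtain rfl | hc := hc.eq_or_lt
  · simp [supportFn_zero hC]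
  refine le_antisymm (supportFn_smul_le hc.le x) ?_
  calc (c : EReal) * supportFn C x = c * supportFn C (c⁻¹ • c • x) := by
        rw [smul_smul, inv_mul_cancel₀ hc.ne', one_smul]
    _ ≤ c * (c⁻¹ * supportFn C (c • x) : EReal) :=
        mul_le_mul_of_nonneg_left (supportFn_smul_le (by positivity) _) (EReal.coe_nonneg.2 hc.le)
    _ = supportFn C (c • x) := by
        rw [← mul_assoc, ← EReal.coe_mul, mul_inv_cancel₀ hc.ne', EReal.coe_one, one_mul]

end SupportFn

lemma eq_subdiffGraph_supportFn {T : Set (X × (X →L[ℝ] ℝ))} (hT : MaximalMonotoneGraph T)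
    (hrange : graphRange T = {u | ((0 : X), u) ∈ T}) (hC : {u | ((0 : X), u) ∈ T}.Nonempty) :
    T = subdiffGraph (supportFn {u | ((0 : X), u) ∈ T}) := by
  refine (hT.2 _ (monotoneGraph_subdiffGraph (properFn_supportFn hC)) ?_).symm
  rintro ⟨x, w⟩ hxw
  have hw : w ∈ {u | ((0 : X), u) ∈ T} := hrange ▸ ⟨x, hxw⟩
  refine mem_subdiffGraph_of_mem_linearMinorants (mem_linearMinorants_supportFn hw)
    (supportFn_le fun u hu => EReal.coe_le_coe_iff.2 ?_)
  have := hT.1 _ hxw _ hu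
  simp only [sub_zero, sub_apply] at this
  linarith

/-- `T` is the subdifferential operator of some l.s.c. proper sublinear
functional iff `T` is maximally monotone and `range T = T(0)`. -/
theorem subdiff_sublinear_iff_maximalMonotone_and_rangeEqAtZero
    {X : Type*} [NormedAddCommGroup X] [NormedSpace ℝ X] [CompleteSpace X]
    (T : Set (X × (X →L[ℝ] ℝ))) :
    (∃ s : X → EReal, LowerSemicontinuous s ∧ ProperFn s ∧ ConvexFn s ∧ PosHomFn s ∧
        T = subdiffGraph s) ↔
      (MaximalMonotoneGraph T ∧ graphRange T = {u : X →L[ℝ] ℝ | ((0 : X), u) ∈ T}) := by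
  constructor
  · rintro ⟨s, hl, hp, hc, hh, rfl⟩
    exact ⟨maximalMonotoneGraph_subdiffGraph hl hp hc hh, graphRange_subdiffGraph hp hc hh⟩
  · rintro ⟨hT, hrange⟩
    have hC : {u | ((0 : X), u) ∈ T}.Nonempty := by
      obtain ⟨⟨x, w⟩, hxw⟩ := hT.nonempty
      exact ⟨w, hrange ▸ ⟨x, hxw⟩⟩
    exact ⟨_, lowerSemicontinuous_supportFn, properFn_supportFn hC, convexFn_supportFn,
      posHomFn_supportFn hC, eq_subdiffGraph_supportFn hT hrange hC⟩
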